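/- For all real ρ with |ρ| ≤ R − 2 and all δ > 0 with δ sinh R = ε₁ for a fixed constant ε₁ > 0 and R ≥ 4, there exists an absolute constant ε₆ > 0 (independent of δ, R, ρ) such that exp(−(4π/δ)(arctan e^ρ − arctan e^{−(R−2)})) ≤ exp(−ε₆ e^{R−|ρ|}) whenever ρ ≥ 0. -/
import Mathlib


lemma arctan_nonneg' {x : ℝ} (hx : 0 ≤ x) : 0 ≤ Real.arctan x := by
  rw [← Real.arctan_zero]
  exact Real.arctan_strictMono.monotone hx

lemma arctan_le_self' {x : ℝ} (hx : 0 ≤ x) : Real.arctan x ≤ x := by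
  have h := Real.le_tan (arctan_nonneg' hx) (Real.arctan_lt_pi_div_two x)
  rwa [Real.tan_arctan] at h

/-- Fix `ε₁ > 0`. There is an absolute constant `ε₆ > 0`
(independent of `δ, R, ρ`) such that for every `R ≥ 4` and `δ > 0` with
`δ sinh R = ε₁`, and every `ρ` with `0 ≤ ρ` and `|ρ| ≤ R − 2`,
`exp(−(4π/δ)(arctan e^ρ − arctan e^{−(R−2)})) ≤ exp(−ε₆ e^{R−|ρ|})`. -/
theorem stmt12 (ε₁ : ℝ) (hε₁ : 0 < ε₁) :
    ∃ ε₆ : ℝ, 0 < ε₆ ∧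
      ∀ R δ ρ : ℝ, 4 ≤ R → 0 < δ → δ * Real.sinh R = ε₁ →
        |ρ| ≤ R - 2 → 0 ≤ ρ →
        Real.exp (-(4 * Real.pi / δ) *
            (Real.arctan (Real.exp ρ) - Real.arctan (Real.exp (-(R - 2)))))
          ≤ Real.exp (-ε₆ * Real.exp (R - |ρ|)) := by
  refine ⟨1 / (2 * ε₁), by positivity, ?_⟩
  intro R δ ρ hR hδ hsinh hρR hρ
  rw [abs_of_nonneg hρ, Real.exp_le_exp]
  have hπ : (3.141592 : ℝ) < Real.pi := Real.pi_gt_d6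
  have he1 : (2.7 : ℝ) < Real.exp 1 := by
    have := Real.exp_one_gt_d9; linarith
  have hexp2 : (7.29 : ℝ) < Real.exp 2 := by
    have h : Real.exp 2 = Real.exp 1 * Real.exp 1 := by
      rw [← Real.exp_add]; norm_num
    nlinarith
  -- e^{-(R-2)} ≤ 0.138
  have hem : Real.exp (-(R - 2)) ≤ 0.138 := by
    have h1 : Real.exp (-(R - 2)) ≤ Real.exp (-2) := by
      apply Real.exp_le_exp.mpr; linarith
    have h3 : Real.exp (-2) ≤ 0.138 := by
      rw [Real.exp_neg, inv_le_comm₀ (by linarith) (by norm_num)]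
      linarith
    linarith
  -- arctan e^ρ = π/2 - arctan e^{-ρ}
  have harc : Real.arctan (Real.exp ρ) = Real.pi / 2 - Real.arctan (Real.exp (-ρ)) := by
    have h := Real.arctan_inv_of_pos (Real.exp_pos ρ)
    rw [← Real.exp_neg] at h
    linarith
  have haρ : Real.arctan (Real.exp (-ρ)) ≤ Real.exp (-ρ) :=
    arctan_le_self' (Real.exp_pos _).le
  have ham : Real.arctan (Real.exp (-(R - 2))) ≤ Real.exp (-(R - 2)) :=
    arctan_le_self' (Real.exp_pos _).le
  have heρ1 : Real.exp (-ρ) ≤ 1 := Real.exp_le_one_iff.mpr (by linarith)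
  set D := Real.arctan (Real.exp ρ) - Real.arctan (Real.exp (-(R - 2))) with hDdef
  have hD : Real.exp (-ρ) / 4 ≤ D := by
    rw [hDdef, harc]; nlinarith
  have hsinhR : Real.exp R / 4 ≤ Real.sinh R := by
    rw [Real.sinh_eq]
    have h1 : Real.exp (-R) ≤ 1 := Real.exp_le_one_iff.mpr (by linarith)
    have h2 : (5 : ℝ) ≤ Real.exp R := by
      have := Real.add_one_le_exp R; linarith
    linarith
  have hsinhpos : 0 < Real.sinh R := lt_of_lt_of_le (by positivity) hsinhR
  have hexpR : 0 < Real.exp R := Real.exp_pos R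
  have hexpq : 0 < Real.exp (-ρ) := Real.exp_pos _
  -- 4π/δ = 4π sinh R / ε₁
  have h4 : 4 * Real.pi / δ = 4 * Real.pi * Real.sinh R / ε₁ := by
    have hδε : δ = ε₁ / Real.sinh R := by
      field_simp
      linarith [hsinh]
    rw [hδε]
    field_simp
  have hsplit : Real.exp (R - ρ) = Real.exp R * Real.exp (-ρ) := by
    rw [← Real.exp_add]; ring_nf
  have hSD : Real.exp R / 4 * (Real.exp (-ρ) / 4) ≤ Real.sinh R * D :=
    mul_le_mul hsinhR hD (by positivity) hsinhpos.le
  have key : 1 / (2 * ε₁) * Real.exp (R - ρ) ≤ 4 * Real.pi / δ * D := by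
    rw [h4, hsplit, div_mul_eq_mul_div, div_mul_eq_mul_div,
      div_le_div_iff₀ (by positivity) hε₁]
    have hDpos : 0 < D := lt_of_lt_of_le (by positivity) hD
    have h5 := mul_le_mul_of_nonneg_left (mul_le_mul_of_nonneg_right hSD hε₁.le)
      (by linarith : (0:ℝ) ≤ 8 * Real.pi)
    have h6 := mul_lt_mul_of_pos_right hπ (mul_pos (mul_pos hexpR hexpq) hε₁)
    nlinarith [h5, h6, mul_pos (mul_pos hexpR hexpq) hε₁]
  linarith [key]
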